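/- arXiv:1906.05547 — 5 statements merged into one kernel-verified Lean document; each statement's English description precedes it below -/
import Mathlib

section
/- Let 0 ≤ λ < 1 and let a, b, r be real numbers with 0 < r < a < b. Then for every complex number z with |z| ≤ r, the inequality |z/(a - z) − λ·z/(b − z)| ≤ |z|/(a − |z|) − λ·|z|/(b − |z|) holds. -/
/-!
Expanding both quotients in geometric series gives
`z / (a - z) - λ z / (b - z) = ∑ₙ (a⁻ⁿ⁻¹ - λ b⁻ⁿ⁻¹) zⁿ⁺¹`, whose coefficients are nonnegative
because `λ ≤ 1` and `a ≤ b`. The norm of such a series is at most its value at `‖z‖`.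
-/

theorem hasSum_pow_succ_div_of_norm_lt {K : Type*} [NormedField K] [CompleteSpace K] {a z : K}
    (h : ‖z‖ < ‖a‖) : HasSum (fun n : ℕ => (z / a) ^ (n + 1)) (z / (a - z)) := by
  have ha : a ≠ 0 := norm_pos_iff.mp ((norm_nonneg z).trans_lt h)
  have hza : ‖z / a‖ < 1 := by rwa [norm_div, div_lt_one (norm_pos_iff.mpr ha)]
  rw [show z / (a - z) = z / a * (1 - z / a)⁻¹ by rw [one_sub_div ha]; field_simp]
  simpa only [← pow_succ'] using (hasSum_geometric_of_norm_lt_one hza).mul_left (z / a)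

theorem hasSum_div_sub_sub_mul_div_sub {K : Type*} [NormedField K] [CompleteSpace K]
    {a b z : K} (lam : K) (ha : ‖z‖ < ‖a‖) (hb : ‖z‖ < ‖b‖) :
    HasSum (fun n : ℕ => (z / a) ^ (n + 1) - lam * (z / b) ^ (n + 1))
      (z / (a - z) - lam * z / (b - z)) := by
  rw [mul_div_assoc]
  exact (hasSum_pow_succ_div_of_norm_lt ha).sub
    ((hasSum_pow_succ_div_of_norm_lt hb).mul_left lam)

theorem mul_div_pow_le_div_pow {lam a b x : ℝ} (k : ℕ) (hlam : lam ≤ 1) (hx : 0 ≤ x)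
    (ha : 0 < a) (hab : a ≤ b) : lam * (x / b) ^ k ≤ (x / a) ^ k :=
  have hxb : 0 ≤ x / b := div_nonneg hx (ha.le.trans hab)
  calc lam * (x / b) ^ k ≤ (x / b) ^ k := mul_le_of_le_one_left (pow_nonneg hxb k) hlam
    _ ≤ (x / a) ^ k := pow_le_pow_left₀ hxb (div_le_div_of_nonneg_left hx ha hab) k

theorem norm_div_pow_sub_mul_div_pow {𝕜 : Type*} [RCLike 𝕜] {lam a b : ℝ} (z : 𝕜) (k : ℕ)
    (hlam : lam ≤ 1) (ha : 0 < a) (hab : a ≤ b) :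
    ‖(z / a) ^ k - (lam : 𝕜) * (z / b) ^ k‖ = (‖z‖ / a) ^ k - lam * (‖z‖ / b) ^ k := by
  have hcoeff : 0 ≤ (1 / a) ^ k - lam * (1 / b) ^ k :=
    sub_nonneg.mpr (mul_div_pow_le_div_pow k hlam zero_le_one ha hab)
  have hfactor : (z / a) ^ k - (lam : 𝕜) * (z / b) ^ k
      = (((1 / a) ^ k - lam * (1 / b) ^ k : ℝ) : 𝕜) * z ^ k := by
    push_cast
    ring
  rw [hfactor, norm_mul, norm_pow, RCLike.norm_of_nonneg hcoeff]
  ring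

theorem stmt_0_general (lam a b r : ℝ) (hlam1 : lam < 1)
    (hra : r < a) (hab : a < b) (z : ℂ) (hz : ‖z‖ ≤ r) :
    ‖z / ((a : ℂ) - z) - (lam : ℂ) * z / ((b : ℂ) - z)‖ ≤
      ‖z‖ / (a - ‖z‖) - lam * ‖z‖ / (b - ‖z‖) := by
  have hza : ‖z‖ < a := hz.trans_lt hra
  have hzb : ‖z‖ < b := hza.trans hab
  have ha : 0 < a := (norm_nonneg z).trans_lt hza
  have hb : 0 < b := ha.trans hab
  have hsumC := hasSum_div_sub_sub_mul_div_sub (lam : ℂ)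
    (by rwa [Complex.norm_of_nonneg ha.le] : ‖z‖ < ‖(a : ℂ)‖)
    (by rwa [Complex.norm_of_nonneg hb.le] : ‖z‖ < ‖(b : ℂ)‖)
  have hsumR := hasSum_div_sub_sub_mul_div_sub lam
    (by rwa [norm_norm, Real.norm_of_nonneg ha.le] : ‖‖z‖‖ < ‖a‖)
    (by rwa [norm_norm, Real.norm_of_nonneg hb.le] : ‖‖z‖‖ < ‖b‖)
  exact hsumC.norm_le_of_bounded hsumR fun n =>
    (norm_div_pow_sub_mul_div_pow z (n + 1) hlam1.le ha hab.le).le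

theorem stmt_0 (lam a b r : ℝ) (hlam0 : 0 ≤ lam) (hlam1 : lam < 1)
    (hr : 0 < r) (hra : r < a) (hab : a < b) (z : ℂ) (hz : ‖z‖ ≤ r) :
    ‖z / ((a : ℂ) - z) - (lam : ℂ) * z / ((b : ℂ) - z)‖ ≤
      ‖z‖ / (a - ‖z‖) - lam * ‖z‖ / (b - ‖z‖) :=
  stmt_0_general lam a b r hlam1 hra hab z hz
end

section
/- Let (ξₙ) be a strictly increasing sequence of positive reals with Σ 1/ξₙ² < ∞, and let ν > 0. Then for every complex z with |z| < ξ₁, |(1 − (1/ν)·Σₙ 2z²/(ξₙ² − z²))² − 1| ≤ ((1/ν)·Σₙ 2|z|²/(ξₙ² − |z|²))·((1/ν)·Σₙ 2|z|²/(ξₙ² − |z|²) + 2). -/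
theorem stmt_1 (ξ : ℕ → ℝ) (hpos : ∀ n, 0 < ξ n) (hmono : StrictMono ξ)
    (hsum : Summable fun n => 1 / (ξ n) ^ 2) (ν : ℝ) (hν : 0 < ν)
    (z : ℂ) (hz : ‖z‖ < ξ 0) :
    ‖(1 - (1 / (ν : ℂ)) * ∑' n, 2 * z ^ 2 / ((ξ n : ℂ) ^ 2 - z ^ 2)) ^ 2 - 1‖ ≤
      ((1 / ν) * ∑' n, 2 * ‖z‖ ^ 2 / ((ξ n) ^ 2 - ‖z‖ ^ 2)) *
        ((1 / ν) * (∑' n, 2 * ‖z‖ ^ 2 / ((ξ n) ^ 2 - ‖z‖ ^ 2)) + 2) := by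
  have hξ0 : ∀ n, ξ 0 ≤ ξ n := fun n => hmono.monotone (Nat.zero_le n)
  have hznn : (0:ℝ) ≤ ‖z‖ := norm_nonneg z
  have hξ0pos := hpos 0
  have hden : ∀ n, 0 < (ξ n) ^ 2 - ‖z‖ ^ 2 := by
    intro n
    have h1 : ‖z‖ < ξ n := lt_of_lt_of_le hz (hξ0 n)
    nlinarith [hpos n]
  set r : ℝ := ‖z‖ ^ 2 / (ξ 0) ^ 2 with hrdef
  have hrnn : 0 ≤ r := by positivity
  have hr1 : r < 1 := by
    rw [hrdef, div_lt_one (by positivity)]; nlinarith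
  have hr : r * (ξ 0) ^ 2 = ‖z‖ ^ 2 := by
    rw [hrdef]; field_simp
  set c : ℝ := 2 * ‖z‖ ^ 2 / (1 - r) with hc
  have hbound : ∀ n, 2 * ‖z‖ ^ 2 / ((ξ n) ^ 2 - ‖z‖ ^ 2) ≤ c * (1 / (ξ n) ^ 2) := by
    intro n
    have hξn := hpos n
    have hξle : (ξ 0) ^ 2 ≤ (ξ n) ^ 2 := by nlinarith [hξ0 n]
    rw [mul_one_div, div_le_div_iff₀ (hden n) (by positivity), hc,
      div_mul_eq_mul_div, le_div_iff₀ (by linarith)]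
    have key2 : ‖z‖ ^ 2 ≤ r * (ξ n) ^ 2 := by
      nlinarith [mul_le_mul_of_nonneg_left hξle hrnn]
    nlinarith [key2, sq_nonneg ‖z‖]
  have hrsum : Summable fun n => 2 * ‖z‖ ^ 2 / ((ξ n) ^ 2 - ‖z‖ ^ 2) :=
    Summable.of_nonneg_of_le (fun n => div_nonneg (by positivity) (le_of_lt (hden n))) hbound (hsum.mul_left c)
  have hnormle : ∀ n, ‖(2 * z ^ 2 / ((ξ n : ℂ) ^ 2 - z ^ 2) : ℂ)‖
      ≤ 2 * ‖z‖ ^ 2 / ((ξ n) ^ 2 - ‖z‖ ^ 2) := by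
    intro n
    have h1 : ‖((ξ n : ℂ)) ^ 2‖ = (ξ n) ^ 2 := by
      rw [norm_pow, Complex.norm_real, Real.norm_eq_abs, abs_of_pos (hpos n)]
    have h2 : ‖(z : ℂ) ^ 2‖ = ‖z‖ ^ 2 := norm_pow z 2
    have hlow : (ξ n) ^ 2 - ‖z‖ ^ 2 ≤ ‖((ξ n : ℂ)) ^ 2 - z ^ 2‖ := by
      calc (ξ n) ^ 2 - ‖z‖ ^ 2 = ‖((ξ n : ℂ)) ^ 2‖ - ‖z ^ 2‖ := by rw [h1, h2]
        _ ≤ ‖((ξ n : ℂ)) ^ 2 - z ^ 2‖ := norm_sub_norm_le _ _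
    rw [norm_div]
    have hnum : ‖(2 * z ^ 2 : ℂ)‖ = 2 * ‖z‖ ^ 2 := by
      rw [norm_mul, norm_pow]; norm_num
    rw [hnum]
    exact div_le_div_of_nonneg_left (by positivity) (hden n) hlow
  have hcsumnorm : Summable fun n => ‖(2 * z ^ 2 / ((ξ n : ℂ) ^ 2 - z ^ 2) : ℂ)‖ :=
    Summable.of_nonneg_of_le (fun n => norm_nonneg _) hnormle hrsum
  set T : ℂ := ∑' n, 2 * z ^ 2 / ((ξ n : ℂ) ^ 2 - z ^ 2) with hT
  set a : ℝ := ∑' n, 2 * ‖z‖ ^ 2 / ((ξ n) ^ 2 - ‖z‖ ^ 2) with ha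
  have hTa : ‖T‖ ≤ a := by
    calc ‖T‖ ≤ ∑' n, ‖(2 * z ^ 2 / ((ξ n : ℂ) ^ 2 - z ^ 2) : ℂ)‖ :=
          norm_tsum_le_tsum_norm hcsumnorm
      _ ≤ a := Summable.tsum_le_tsum hnormle hcsumnorm hrsum
  have hanneg : 0 ≤ a := tsum_nonneg fun n => div_nonneg (by positivity) (le_of_lt (hden n))
  set x : ℂ := (1 / (ν : ℂ)) * T with hx
  have hxnorm : ‖x‖ ≤ (1 / ν) * a := by
    rw [hx, norm_mul]
    have : ‖(1 / (ν : ℂ))‖ = 1 / ν := by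
      rw [norm_div, norm_one, Complex.norm_real, Real.norm_eq_abs, abs_of_pos hν]
    rw [this]
    exact mul_le_mul_of_nonneg_left hTa (by positivity)
  have key : (1 - x) ^ 2 - 1 = x * (x - 2) := by ring
  rw [key]
  have hb : (0:ℝ) ≤ (1 / ν) * a := by positivity
  calc ‖x * (x - 2)‖ = ‖x‖ * ‖x - 2‖ := norm_mul _ _
    _ ≤ ‖x‖ * (‖x‖ + 2) := by
        apply mul_le_mul_of_nonneg_left _ (norm_nonneg x)
        calc ‖x - 2‖ ≤ ‖x‖ + ‖(2:ℂ)‖ := norm_sub_le _ _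
          _ = ‖x‖ + 2 := by norm_num
    _ ≤ ((1 / ν) * a) * ((1 / ν) * a + 2) := by
        nlinarith [norm_nonneg x]
end

section
/- Let (ξₙ) be a strictly increasing sequence of positive reals with Σ 1/ξₙ² < ∞, and for 0 < r < ξ₁ define u(r) = (1 − Σₙ 2r²/(ξₙ² − r²))² − 4(1 − Σₙ 2r²/(ξₙ² − r²)) + 2. Then u is continuous and strictly increasing on (0, ξ₁), u(r) → −1 as r → 0⁺, and u(r) → +∞ as r → ξ₁⁻; consequently u has a unique zero in (0, ξ₁). -/
open Filter Topology Set

-- Auxiliary lemmas about g r = ∑' n, 2 r² / (ξ n ² − r²).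

section Aux
variable {ξ : ℕ → ℝ}

lemma aux_den_pos (hpos : ∀ n, 0 < ξ n) (hmono : StrictMono ξ)
    {r : ℝ} (hr : r ∈ Ioo 0 (ξ 0)) (n : ℕ) : 0 < (ξ n) ^ 2 - r ^ 2 := by
  have h0 : ξ 0 ≤ ξ n := hmono.monotone (Nat.zero_le n)
  have : r < ξ n := lt_of_lt_of_le hr.2 h0
  nlinarith [hr.1]

lemma aux_term_le (hpos : ∀ n, 0 < ξ n) (hmono : StrictMono ξ)
    {r : ℝ} (hr : r ∈ Ioo 0 (ξ 0)) (n : ℕ) :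
    2 * r ^ 2 / ((ξ n) ^ 2 - r ^ 2)
      ≤ (2 * r ^ 2 * (ξ 0) ^ 2 / ((ξ 0) ^ 2 - r ^ 2)) * (1 / (ξ n) ^ 2) := by
  have h0 : ξ 0 ≤ ξ n := hmono.monotone (Nat.zero_le n)
  have hdn := aux_den_pos hpos hmono hr n
  have hd0 : 0 < (ξ 0) ^ 2 - r ^ 2 := by nlinarith [hr.1, hr.2]
  have hn2 : (0:ℝ) < (ξ n) ^ 2 := pow_pos (hpos n) 2
  have hsq : (ξ 0) ^ 2 ≤ (ξ n) ^ 2 := by nlinarith [hpos 0]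
  rw [mul_one_div, div_div, div_le_div_iff₀ hdn (by positivity)]
  have key : (0:ℝ) ≤ 2 * r ^ 2 * r ^ 2 * ((ξ n) ^ 2 - (ξ 0) ^ 2) := by
    have : (0:ℝ) ≤ 2 * r ^ 2 * r ^ 2 := by positivity
    exact mul_nonneg this (by linarith)
  nlinarith [key]

lemma aux_summable (hpos : ∀ n, 0 < ξ n) (hmono : StrictMono ξ)
    (hsum : Summable fun n => 1 / (ξ n) ^ 2)
    {r : ℝ} (hr : r ∈ Ioo 0 (ξ 0)) :
    Summable (fun n => 2 * r ^ 2 / ((ξ n) ^ 2 - r ^ 2)) := by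
  refine Summable.of_nonneg_of_le (fun n => ?_) (fun n => aux_term_le hpos hmono hr n)
    (hsum.mul_left _)
  have := aux_den_pos hpos hmono hr n
  positivity

end Aux

theorem stmt_2 (ξ : ℕ → ℝ) (hpos : ∀ n, 0 < ξ n) (hmono : StrictMono ξ)
    (hsum : Summable fun n => 1 / (ξ n) ^ 2)
    (u : ℝ → ℝ)
    (hu : ∀ r ∈ Ioo 0 (ξ 0),
      u r = (1 - ∑' n, 2 * r ^ 2 / ((ξ n) ^ 2 - r ^ 2)) ^ 2
            - 4 * (1 - ∑' n, 2 * r ^ 2 / ((ξ n) ^ 2 - r ^ 2)) + 2) :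
    ContinuousOn u (Ioo 0 (ξ 0)) ∧ StrictMonoOn u (Ioo 0 (ξ 0)) ∧
      Tendsto u (𝓝[>] 0) (𝓝 (-1)) ∧ Tendsto u (𝓝[<] (ξ 0)) atTop ∧
      ∃! r, r ∈ Ioo 0 (ξ 0) ∧ u r = 0 := by
  set g : ℝ → ℝ := fun r => ∑' n, 2 * r ^ 2 / ((ξ n) ^ 2 - r ^ 2) with hg
  have hξ0 : 0 < ξ 0 := hpos 0
  -- g is nonnegative on Ioo
  have hg_nonneg : ∀ r ∈ Ioo 0 (ξ 0), 0 ≤ g r := by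
    intro r hr
    refine tsum_nonneg fun n => ?_
    have := aux_den_pos hpos hmono hr n
    positivity
  -- g strictly monotone
  have hg_mono : StrictMonoOn g (Ioo 0 (ξ 0)) := by
    intro r1 hr1 r2 hr2 h12
    refine Summable.tsum_lt_tsum_of_nonneg (i := 0) (fun n => ?_) (fun n => ?_) ?_
      (aux_summable hpos hmono hsum hr2)
    · have := aux_den_pos hpos hmono hr1 n; positivity
    · have hd1 := aux_den_pos hpos hmono hr1 n
      have hd2 := aux_den_pos hpos hmono hr2 n
      rw [div_le_div_iff₀ hd1 hd2]
      have hsq : r1 ^ 2 ≤ r2 ^ 2 := by nlinarith [hr1.1]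
      nlinarith [hsq, pow_pos (hpos n) 2, mul_nonneg (sub_nonneg.2 hsq) (pow_pos (hpos n) 2).le]
    · have hd1 := aux_den_pos hpos hmono hr1 0
      have hd2 := aux_den_pos hpos hmono hr2 0
      rw [div_lt_div_iff₀ hd1 hd2]
      have hsq : r1 ^ 2 < r2 ^ 2 := by nlinarith [hr1.1]
      nlinarith [hsq, pow_pos (hpos 0) 2, mul_pos (sub_pos.2 hsq) (pow_pos (hpos 0) 2)]
  -- g continuous on Ioo
  have hg_cont : ContinuousOn g (Ioo 0 (ξ 0)) := by
    intro r hr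
    obtain ⟨b, hrb, hb0⟩ := exists_between hr.2
    have hbIoo : b ∈ Ioo 0 (ξ 0) := ⟨lt_trans hr.1 hrb, hb0⟩
    have hcont : ContinuousOn g (Ioo 0 b) := by
      refine continuousOn_tsum (u := fun n => 2 * b ^ 2 / ((ξ n) ^ 2 - b ^ 2))
        (fun n => ?_) (aux_summable hpos hmono hsum hbIoo) (fun n x hx => ?_)
      · refine ContinuousOn.div (by fun_prop) (by fun_prop) (fun x hx => ?_)
        have : x ∈ Ioo 0 (ξ 0) := ⟨hx.1, lt_trans hx.2 hb0⟩
        exact ne_of_gt (aux_den_pos hpos hmono this n)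
      · have hxI : x ∈ Ioo 0 (ξ 0) := ⟨hx.1, lt_trans hx.2 hb0⟩
        have hdx := aux_den_pos hpos hmono hxI n
        have hdb := aux_den_pos hpos hmono hbIoo n
        rw [Real.norm_eq_abs, abs_of_nonneg (by positivity)]
        rw [div_le_div_iff₀ hdx hdb]
        have hsq : x ^ 2 ≤ b ^ 2 := by nlinarith [hx.1, hx.2]
        nlinarith [hsq, pow_pos (hpos n) 2, mul_nonneg (sub_nonneg.2 hsq) (pow_pos (hpos n) 2).le]
    exact (hcont.continuousAt (IsOpen.mem_nhds isOpen_Ioo ⟨hr.1, hrb⟩)).continuousWithinAt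
      (s := Ioo 0 (ξ 0))
  -- u agrees with polynomial of g on Ioo
  have hu' : ∀ r ∈ Ioo 0 (ξ 0), u r = (1 - g r) ^ 2 - 4 * (1 - g r) + 2 := hu
  -- Continuity of u
  have hu_cont : ContinuousOn u (Ioo 0 (ξ 0)) := by
    have : ContinuousOn (fun r => (1 - g r) ^ 2 - 4 * (1 - g r) + 2) (Ioo 0 (ξ 0)) := by
      fun_prop
    exact this.congr hu'
  -- Strict monotonicity of u
  have hu_mono : StrictMonoOn u (Ioo 0 (ξ 0)) := by
    intro r1 hr1 r2 hr2 h12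
    have hg12 := hg_mono hr1 hr2 h12
    have h0 := hg_nonneg r1 hr1
    rw [hu' r1 hr1, hu' r2 hr2]
    nlinarith
  -- limit of g at 0+: squeeze
  have hg_lim0 : Tendsto g (𝓝[>] 0) (𝓝 0) := by
    have hev : ∀ᶠ r in 𝓝[>] (0:ℝ), r ∈ Ioo 0 (ξ 0) :=
      Ioo_mem_nhdsGT_of_mem ⟨le_refl 0, hξ0⟩
    have hupper : ∀ r ∈ Ioo 0 (ξ 0),
        g r ≤ (2 * r ^ 2 * (ξ 0) ^ 2 / ((ξ 0) ^ 2 - r ^ 2)) * ∑' n, 1 / (ξ n) ^ 2 := by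
      intro r hr
      rw [← tsum_mul_left]
      refine Summable.tsum_le_tsum (fun n => aux_term_le hpos hmono hr n)
        (aux_summable hpos hmono hsum hr) (hsum.mul_left _)
    have hlim : Tendsto (fun r : ℝ =>
        (2 * r ^ 2 * (ξ 0) ^ 2 / ((ξ 0) ^ 2 - r ^ 2)) * ∑' n, 1 / (ξ n) ^ 2)
        (𝓝[>] 0) (𝓝 0) := by
      have : ContinuousAt (fun r : ℝ =>
          (2 * r ^ 2 * (ξ 0) ^ 2 / ((ξ 0) ^ 2 - r ^ 2)) * ∑' n, 1 / (ξ n) ^ 2) 0 := by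
        have hne : (ξ 0) ^ 2 - (0:ℝ) ^ 2 ≠ 0 := by simpa using (pow_pos hξ0 2).ne'
        fun_prop (disch := assumption)
      have h0 : (2 * (0:ℝ) ^ 2 * (ξ 0) ^ 2 / ((ξ 0) ^ 2 - (0:ℝ) ^ 2)) * ∑' n, 1 / (ξ n) ^ 2 = 0 := by
        simp
      simpa [h0] using (this.tendsto.mono_left nhdsWithin_le_nhds)
    refine tendsto_of_tendsto_of_tendsto_of_le_of_le' tendsto_const_nhds hlim ?_ ?_
    · filter_upwards [hev] with r hr using hg_nonneg r hr
    · filter_upwards [hev] with r hr using hupper r hr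
  -- limit of u at 0+
  have hu_lim0 : Tendsto u (𝓝[>] 0) (𝓝 (-1)) := by
    have hev : ∀ᶠ r in 𝓝[>] (0:ℝ), r ∈ Ioo 0 (ξ 0) :=
      Ioo_mem_nhdsGT_of_mem ⟨le_refl 0, hξ0⟩
    have hpoly : Tendsto (fun r => (1 - g r) ^ 2 - 4 * (1 - g r) + 2) (𝓝[>] 0) (𝓝 (-1)) := by
      have : Tendsto (fun v : ℝ => (1 - v) ^ 2 - 4 * (1 - v) + 2) (𝓝 0) (𝓝 (-1)) := by
        have hc : Continuous (fun v : ℝ => (1 - v) ^ 2 - 4 * (1 - v) + 2) := by fun_prop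
        have := hc.tendsto 0
        norm_num at this
        exact this
      exact this.comp hg_lim0
    refine hpoly.congr' ?_
    filter_upwards [hev] with r hr using (hu' r hr).symm
  -- limit of g at ξ0⁻ : atTop
  have hg_limtop : Tendsto g (𝓝[<] (ξ 0)) atTop := by
    have hev : ∀ᶠ r in 𝓝[<] (ξ 0), r ∈ Ioo 0 (ξ 0) :=
      Ioo_mem_nhdsLT_of_mem ⟨hξ0, le_refl _⟩
    have hfirst : Tendsto (fun r : ℝ => 2 * r ^ 2 / ((ξ 0) ^ 2 - r ^ 2)) (𝓝[<] (ξ 0)) atTop := by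
      have hden : Tendsto (fun r : ℝ => (ξ 0) ^ 2 - r ^ 2) (𝓝[<] (ξ 0)) (𝓝[>] 0) := by
        refine tendsto_nhdsWithin_of_tendsto_nhds_of_eventually_within _ ?_ ?_
        · have : Tendsto (fun r : ℝ => (ξ 0) ^ 2 - r ^ 2) (𝓝 (ξ 0)) (𝓝 ((ξ 0)^2 - (ξ 0)^2)) := by
            exact (tendsto_const_nhds.sub ((continuous_pow 2).tendsto _))
          simpa using this.mono_left nhdsWithin_le_nhds
        · filter_upwards [hev] with r hr
          have := aux_den_pos hpos hmono hr 0
          exact this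
      have hinv : Tendsto (fun r : ℝ => ((ξ 0) ^ 2 - r ^ 2)⁻¹) (𝓝[<] (ξ 0)) atTop :=
        tendsto_inv_nhdsGT_zero.comp hden
      have hnum : Tendsto (fun r : ℝ => 2 * r ^ 2) (𝓝[<] (ξ 0)) (𝓝 (2 * (ξ 0) ^ 2)) := by
        exact ((continuous_const.mul (continuous_pow 2)).tendsto _).mono_left nhdsWithin_le_nhds
      have := hnum.pos_mul_atTop (by positivity) hinv
      simpa [div_eq_mul_inv] using this
    refine tendsto_atTop_mono' _ ?_ hfirst
    filter_upwards [hev] with r hr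
    exact Summable.le_tsum (aux_summable hpos hmono hsum hr) 0
      (fun n _ => by have := aux_den_pos hpos hmono hr n; positivity)
  -- limit of u at ξ0⁻
  have hu_limtop : Tendsto u (𝓝[<] (ξ 0)) atTop := by
    have hev : ∀ᶠ r in 𝓝[<] (ξ 0), r ∈ Ioo 0 (ξ 0) :=
      Ioo_mem_nhdsLT_of_mem ⟨hξ0, le_refl _⟩
    have hpoly : Tendsto (fun v : ℝ => (1 - v) ^ 2 - 4 * (1 - v) + 2) atTop atTop := by
      have h1 : Tendsto (fun v : ℝ => v + 1) atTop atTop := tendsto_atTop_add_const_right _ _ tendsto_id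
      have h2 : Tendsto (fun w : ℝ => w ^ 2 - 2) atTop atTop :=
        tendsto_atTop_add_const_right _ _ (tendsto_pow_atTop two_ne_zero)
      have := (h2.comp h1)
      refine this.congr fun v => ?_
      simp only [Function.comp_apply]
      ring
    have := hpoly.comp hg_limtop
    refine this.congr' ?_
    filter_upwards [hev] with r hr
    exact (hu' r hr).symm
  refine ⟨hu_cont, hu_mono, hu_lim0, hu_limtop, ?_⟩
  -- existence of zero
  have hlt : ∀ᶠ r in 𝓝[>] (0:ℝ), u r < 0 := by
    have := hu_lim0.eventually_lt_const (by norm_num : (-1:ℝ) < 0)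
    exact this
  have hevl : ∀ᶠ r in 𝓝[>] (0:ℝ), r ∈ Ioo 0 (ξ 0) := Ioo_mem_nhdsGT_of_mem ⟨le_refl 0, hξ0⟩
  obtain ⟨a, ha0, haI⟩ := (hlt.and hevl).exists
  have hgt : ∀ᶠ r in 𝓝[<] (ξ 0), 0 < u r := hu_limtop.eventually_gt_atTop 0
  have hevr : ∀ᶠ r in 𝓝[<] (ξ 0), r ∈ Ioo 0 (ξ 0) := Ioo_mem_nhdsLT_of_mem ⟨hξ0, le_refl _⟩
  obtain ⟨b, hb0, hbI⟩ := (hgt.and hevr).exists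
  have hab : a < b := by
    by_contra h
    push_neg at h
    have := hu_mono.monotoneOn hbI haI h
    linarith
  have hsub : Icc a b ⊆ Ioo 0 (ξ 0) := fun x hx =>
    ⟨lt_of_lt_of_le haI.1 hx.1, lt_of_le_of_lt hx.2 hbI.2⟩
  have hivt : Icc (u a) (u b) ⊆ u '' Icc a b :=
    intermediate_value_Icc hab.le (hu_cont.mono hsub)
  obtain ⟨c, hc, hc0⟩ := hivt ⟨ha0.le, hb0.le⟩
  refine ⟨c, ⟨hsub hc, hc0⟩, ?_⟩
  rintro d ⟨hdI, hd0⟩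
  exact hu_mono.injOn hdI (hsub hc) (by rw [hd0, hc0])
end

section
/- Let (ξₙ) be a strictly increasing sequence of positive reals with Σ 1/ξₙ² < ∞, let A, B be real numbers with −1 ≤ B < A ≤ 1, and for 0 < r < ξ₁ define v(r) = (1 − Σₙ 2r²/(ξₙ² − r²)) − 1 + (A − B)/(1 + |B|). Then v is continuous and strictly decreasing on (0, ξ₁), v(r) → (A−B)/(1+|B|) > 0 as r → 0⁺, and v(r) → −∞ as r → ξ₁⁻; hence v has a unique zero in (0, ξ₁). -/
open Filter Topology Set

theorem stmt_3 (ξ : ℕ → ℝ) (hpos : ∀ n, 0 < ξ n) (hmono : StrictMono ξ)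
    (hsum : Summable fun n => 1 / (ξ n) ^ 2)
    (A B : ℝ) (hB : -1 ≤ B) (hBA : B < A) (hA : A ≤ 1)
    (v : ℝ → ℝ)
    (hv : ∀ r ∈ Ioo 0 (ξ 0),
      v r = (1 - ∑' n, 2 * r ^ 2 / ((ξ n) ^ 2 - r ^ 2)) - 1 + (A - B) / (1 + |B|)) :
    ContinuousOn v (Ioo 0 (ξ 0)) ∧ StrictAntiOn v (Ioo 0 (ξ 0)) ∧
      Tendsto v (𝓝[>] 0) (𝓝 ((A - B) / (1 + |B|))) ∧ 0 < (A - B) / (1 + |B|) ∧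
      Tendsto v (𝓝[<] (ξ 0)) atBot ∧
      ∃! r, r ∈ Ioo 0 (ξ 0) ∧ v r = 0 := by
  have hξ01 : 0 < ξ 0 := hpos 0
  set c : ℝ := (A - B) / (1 + |B|) with hc
  have hcpos : 0 < c := by
    apply div_pos (by linarith)
    have := abs_nonneg B
    linarith
  set S : ℝ → ℝ := fun r => ∑' n, 2 * r ^ 2 / ((ξ n) ^ 2 - r ^ 2) with hSdef
  have hle : ∀ n, ξ 0 ≤ ξ n := fun n => hmono.monotone (Nat.zero_le n)
  have hden : ∀ r, -(ξ 0) < r → r < ξ 0 → ∀ n, 0 < ξ n ^ 2 - r ^ 2 := by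
    intro r h1 h2 n
    have h3 := hle n
    nlinarith
  -- key bound
  have hkey : ∀ b, 0 < b → b < ξ 0 → ∀ r, -b ≤ r → r ≤ b → ∀ n,
      2 * r ^ 2 / (ξ n ^ 2 - r ^ 2) ≤ (2 * b ^ 2 * ξ 0 ^ 2 / (ξ 0 ^ 2 - b ^ 2)) * (1 / ξ n ^ 2) := by
    intro b hb0 hbξ r hr1 hr2 n
    have hr2sq : r ^ 2 ≤ b ^ 2 := sq_le_sq' hr1 hr2
    have hdpos : 0 < ξ n ^ 2 - r ^ 2 := hden r (by linarith) (by linarith) n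
    have hξn := hpos n
    have hlen := hle n
    have hb2 : 0 < ξ 0 ^ 2 - b ^ 2 := by nlinarith
    rw [mul_one_div, div_le_div_iff₀ hdpos (by positivity), div_mul_eq_mul_div,
      le_div_iff₀ hb2]
    nlinarith [mul_nonneg (mul_nonneg (sq_nonneg (ξ 0)) (sq_nonneg (ξ n)))
        (sub_nonneg.2 hr2sq),
      mul_nonneg (mul_nonneg (sq_nonneg b) (sq_nonneg r))
        (sub_nonneg.2 (by nlinarith : ξ 0 ^ 2 ≤ ξ n ^ 2))]
  have hnonneg : ∀ r, -(ξ 0) < r → r < ξ 0 → ∀ n,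
      0 ≤ 2 * r ^ 2 / (ξ n ^ 2 - r ^ 2) := by
    intro r h1 h2 n
    have := hden r h1 h2 n
    positivity
  have hsummable : ∀ r ∈ Ioo 0 (ξ 0), Summable (fun n => 2 * r ^ 2 / (ξ n ^ 2 - r ^ 2)) := by
    intro r hr
    apply Summable.of_nonneg_of_le (hnonneg r (by linarith [hr.1]) hr.2)
      (fun n => hkey r hr.1 hr.2 r (by linarith [hr.1]) le_rfl n)
    exact hsum.mul_left _
  -- continuity of S at points of Ioo
  have hScont : ∀ x ∈ Ioo 0 (ξ 0), ContinuousAt S x := by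
    intro x hx
    set b : ℝ := (x + ξ 0) / 2 with hbdef
    have hxb : x < b := by rw [hbdef]; linarith [hx.2]
    have hbξ : b < ξ 0 := by rw [hbdef]; linarith [hx.2]
    have hb0 : 0 < b := by rw [hbdef]; linarith [hx.1]
    have hcont : ContinuousOn S (Icc (-b) b) := by
      apply continuousOn_tsum (u := fun n => (2 * b ^ 2 * ξ 0 ^ 2 / (ξ 0 ^ 2 - b ^ 2)) * (1 / ξ n ^ 2))
      · intro n
        apply ContinuousOn.div (by fun_prop) (by fun_prop)
        intro r hr
        have : 0 < ξ n ^ 2 - r ^ 2 :=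
          hden r (by linarith [hr.1]) (by linarith [hr.2]) n
        linarith
      · exact hsum.mul_left _
      · intro n r hr
        rw [Real.norm_eq_abs, abs_of_nonneg (hnonneg r (by linarith [hr.1]) (by linarith [hr.2]) n)]
        exact hkey b hb0 hbξ r hr.1 hr.2 n
    exact hcont.continuousAt (Icc_mem_nhds (by linarith [hx.1]) hxb)
  have hvS : ∀ r ∈ Ioo 0 (ξ 0), v r = c - S r := by
    intro r hr
    rw [hv r hr]; ring
  -- Continuity of v
  have hvcont : ContinuousOn v (Ioo 0 (ξ 0)) := by
    apply ContinuousOn.congr (f := fun r => c - S r)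
    · intro x hx
      exact (continuousAt_const.sub (hScont x hx)).continuousWithinAt
    · intro r hr; exact hvS r hr
  -- strict monotonicity of S
  have hSmono : ∀ r ∈ Ioo 0 (ξ 0), ∀ s ∈ Ioo 0 (ξ 0), r < s → S r < S s := by
    intro r hr s hs hrs
    apply Summable.tsum_lt_tsum_of_nonneg (i := 0)
    · exact hnonneg r (by linarith [hr.1]) hr.2
    · intro n
      have hdr := hden r (by linarith [hr.1]) hr.2 n
      have hds := hden s (by linarith [hs.1]) hs.2 n
      rw [div_le_div_iff₀ hdr hds]
      have h1 : r ^ 2 ≤ s ^ 2 := by nlinarith [hr.1, hs.1]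
      nlinarith [mul_nonneg (sq_nonneg (ξ n)) (sub_nonneg.2 h1)]
    · have hdr := hden r (by linarith [hr.1]) hr.2 0
      have hds := hden s (by linarith [hs.1]) hs.2 0
      rw [div_lt_div_iff₀ hdr hds]
      have h1 : 0 < s ^ 2 - r ^ 2 := by nlinarith [hr.1, hs.1]
      nlinarith [mul_pos (pow_pos (hpos 0) 2) h1]
    · exact hsummable s hs
  have hanti : StrictAntiOn v (Ioo 0 (ξ 0)) := by
    intro r hr s hs hrs
    rw [hvS r hr, hvS s hs]
    have := hSmono r hr s hs hrs
    linarith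
  -- limit at 0⁺
  have hmemIoi : Ioo (0:ℝ) (ξ 0) ∈ 𝓝[>] (0:ℝ) := Ioo_mem_nhdsGT_of_mem ⟨le_refl 0, hξ01⟩
  have hS0 : Tendsto S (𝓝[>] (0:ℝ)) (𝓝 0) := by
    set T : ℝ := ∑' n, 1 / ξ n ^ 2 with hT
    have hhalf : Ioo (0:ℝ) (ξ 0 / 2) ∈ 𝓝[>] (0:ℝ) :=
      Ioo_mem_nhdsGT_of_mem ⟨le_refl 0, by linarith⟩
    apply squeeze_zero' (g := fun r => 8 / 3 * r ^ 2 * T)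
    · filter_upwards [hmemIoi] with r hr
      exact tsum_nonneg (hnonneg r (by linarith [hr.1]) hr.2)
    · filter_upwards [hhalf] with r hr
      have hrI : r ∈ Ioo 0 (ξ 0) := ⟨hr.1, by linarith [hr.2]⟩
      have hbnd : ∀ n, 2 * r ^ 2 / (ξ n ^ 2 - r ^ 2) ≤ 8 / 3 * r ^ 2 * (1 / ξ n ^ 2) := by
        intro n
        have hdr := hden r (by linarith [hr.1]) hrI.2 n
        have hlen := hle n
        have hξn := hpos n
        rw [mul_one_div, div_le_div_iff₀ hdr (by positivity)]
        have h4 : r ^ 2 ≤ ξ n ^ 2 / 4 := by nlinarith [hr.2, hr.1]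
        nlinarith [mul_nonneg (sq_nonneg r) (sub_nonneg.2 h4)]
      calc S r ≤ ∑' n, 8 / 3 * r ^ 2 * (1 / ξ n ^ 2) :=
            Summable.tsum_le_tsum hbnd (hsummable r hrI) (hsum.mul_left _)
        _ = 8 / 3 * r ^ 2 * T := tsum_mul_left
    · have : Tendsto (fun r : ℝ => 8 / 3 * r ^ 2 * T) (𝓝 0) (𝓝 (8 / 3 * (0:ℝ) ^ 2 * T)) :=
        ((continuous_const.mul (continuous_pow 2)).mul continuous_const).tendsto 0
      simpa using this.mono_left nhdsWithin_le_nhds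
  have hT0 : Tendsto v (𝓝[>] (0:ℝ)) (𝓝 c) := by
    have h1 : Tendsto (fun r => c - S r) (𝓝[>] (0:ℝ)) (𝓝 c) := by
      simpa using tendsto_const_nhds.sub hS0
    apply h1.congr'
    filter_upwards [hmemIoi] with r hr
    exact (hvS r hr).symm
  -- limit at ξ 0 from the left
  have hmemIio : Ioo (0:ℝ) (ξ 0) ∈ 𝓝[<] (ξ 0) := Ioo_mem_nhdsLT_of_mem ⟨hξ01, le_refl _⟩
  have ht : Tendsto (fun r => 2 * r ^ 2 * (ξ 0 ^ 2 - r ^ 2)⁻¹) (𝓝[<] (ξ 0)) atTop := by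
    apply Filter.Tendsto.pos_mul_atTop (C := 2 * ξ 0 ^ 2) (by positivity)
    · have : Tendsto (fun r : ℝ => 2 * r ^ 2) (𝓝 (ξ 0)) (𝓝 (2 * ξ 0 ^ 2)) :=
        (continuous_const.mul (continuous_pow 2)).tendsto _
      exact this.mono_left nhdsWithin_le_nhds
    · apply Filter.Tendsto.inv_tendsto_nhdsGT_zero
      apply tendsto_nhdsWithin_of_tendsto_nhds_of_eventually_within
      · have : Tendsto (fun r : ℝ => ξ 0 ^ 2 - r ^ 2) (𝓝 (ξ 0)) (𝓝 (ξ 0 ^ 2 - ξ 0 ^ 2)) :=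
          (continuous_const.sub (continuous_pow 2)).tendsto _
        simpa using this.mono_left nhdsWithin_le_nhds
      · filter_upwards [hmemIio] with r hr
        exact hden r (by linarith [hr.1]) hr.2 0
  have hbot : Tendsto v (𝓝[<] (ξ 0)) atBot := by
    have hub : v ≤ᶠ[𝓝[<] (ξ 0)] fun r => c - 2 * r ^ 2 * (ξ 0 ^ 2 - r ^ 2)⁻¹ := by
      filter_upwards [hmemIio] with r hr
      show v r ≤ c - 2 * r ^ 2 * (ξ 0 ^ 2 - r ^ 2)⁻¹
      rw [hvS r hr]
      have hfirst : 2 * r ^ 2 / (ξ 0 ^ 2 - r ^ 2) ≤ S r :=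
        Summable.le_tsum (hsummable r hr) 0 (fun n _ => hnonneg r (by linarith [hr.1]) hr.2 n)
      rw [div_eq_mul_inv] at hfirst
      linarith
    apply tendsto_atBot_mono' _ hub
    have hneg : Tendsto (fun r => -(2 * r ^ 2 * (ξ 0 ^ 2 - r ^ 2)⁻¹)) (𝓝[<] (ξ 0)) atBot :=
      tendsto_neg_atTop_atBot.comp ht
    simpa only [sub_eq_add_neg] using tendsto_atBot_add_const_left _ c hneg
  refine ⟨hvcont, hanti, hT0, hcpos, hbot, ?_⟩
  -- existence and uniqueness of the zero
  obtain ⟨b, hbneg, hbI⟩ :=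
    ((hbot.eventually (eventually_lt_atBot 0)).and hmemIio).exists
  obtain ⟨a, hapos, haI⟩ :=
    ((hT0.eventually (eventually_gt_nhds hcpos)).and
      (Ioo_mem_nhdsGT_of_mem ⟨le_refl 0, hbI.1⟩)).exists
  have hsub : Icc a b ⊆ Ioo 0 (ξ 0) := fun x hx =>
    ⟨lt_of_lt_of_le haI.1 hx.1, lt_of_le_of_lt hx.2 hbI.2⟩
  obtain ⟨r, hrmem, hr0⟩ :=
    intermediate_value_Ioo' (le_of_lt haI.2) (hvcont.mono hsub) (⟨hbneg, hapos⟩ : (0:ℝ) ∈ Ioo (v b) (v a))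
  have hrI : r ∈ Ioo 0 (ξ 0) := ⟨lt_trans haI.1 hrmem.1, lt_trans hrmem.2 hbI.2⟩
  refine ⟨r, ⟨hrI, hr0⟩, ?_⟩
  intro y hy
  by_contra hne
  rcases lt_or_gt_of_ne hne with h | h
  · have := hanti hy.1 hrI h
    rw [hy.2, hr0] at this
    exact lt_irrefl 0 this
  · have := hanti hrI hy.1 h
    rw [hy.2, hr0] at this
    exact lt_irrefl 0 this
end

section
/- Let (ξₙ') and (ξₙ) be interlacing strictly increasing positive sequences, 0 < ξ₁' < ξ₁ < ξ₂' < ξ₂ < ⋯, with Σ 1/ξₙ² < ∞ and Σ 1/ξₙ'² < ∞, let λ ≥ 0, and for 0 < r < ξ₁' define v(r) = −(Σₙ 2r²/(ξₙ'² − r²) + λ·Σₙ 2r²/(ξₙ² − r²)) + c, where c > 0 is a constant. Then v is strictly decreasing on (0, ξ₁') with v(0⁺) = c > 0 and v(r) → −∞ as r → ξ₁'⁻, so v has a unique zero in (0, ξ₁'). -/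
/-!
Each summand `2r²/(x² − r²)` with `x ≥ ξ₁'` is nonnegative, strictly increasing in `r` on
`[0, ξ₁')` and, for `|r| ≤ m < ξ₁'`, bounded by a constant multiple of `1/x²`. Summability of
`Σ 1/ξₙ²` therefore makes both series continuous (Weierstrass M-test), vanishing at `0` and
strictly increasing, while the single summand with `x = ξ₁'` already forces the first series to
`+∞` as `r → ξ₁'⁻`. So `v` decreases strictly from `c > 0` to `−∞`, and the intermediate value
theorem gives exactly one zero.
-/

open Set Filter Topology

theorem StrictAntiOn.existsUnique_eq {α β : Type*} [ConditionallyCompleteLinearOrder α]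
    [TopologicalSpace α] [OrderTopology α] [DenselyOrdered α] [LinearOrder β]
    [TopologicalSpace β] [OrderClosedTopology β] {f : α → β} {s : Set α} (hs : s.OrdConnected)
    (hf : StrictAntiOn f s) (hcont : ContinuousOn f s) {x y : α} (hx : x ∈ s) (hy : y ∈ s)
    {t : β} (ht : t ∈ Icc (f y) (f x)) : ∃! r, r ∈ s ∧ f r = t := by
  obtain ⟨r, hr, hrt⟩ := hs.isPreconnected.intermediate_value hy hx hcont ht
  exact ⟨r, ⟨hr, hrt⟩, fun r' hr' => hf.injOn hr'.1 hr (hr'.2.trans hrt.symm)⟩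

theorem StrictAntiOn.existsUnique_eq_zero_of_tendsto {α : Type*}
    [ConditionallyCompleteLinearOrder α] [TopologicalSpace α] [OrderTopology α]
    [DenselyOrdered α] {f : α → ℝ} {a b : α} {c : ℝ} (hab : a < b)
    (hf : StrictAntiOn f (Ioo a b)) (hcont : ContinuousOn f (Ioo a b))
    (ha : Tendsto f (𝓝[>] a) (𝓝 c)) (hc : 0 < c) (hb : Tendsto f (𝓝[<] b) atBot) :
    ∃! r, r ∈ Ioo a b ∧ f r = 0 := by
  have := nhdsGT_neBot_of_exists_gt ⟨b, hab⟩
  have := nhdsLT_neBot_of_exists_lt ⟨a, hab⟩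
  obtain ⟨x, hx, hfx⟩ :=
    (Eventually.and (Ioo_mem_nhdsGT hab) (ha.eventually (eventually_gt_nhds hc))).exists
  obtain ⟨y, hy, hfy⟩ :=
    (Eventually.and (Ioo_mem_nhdsLT hab) (hb.eventually (eventually_lt_atBot 0))).exists
  exact hf.existsUnique_eq ordConnected_Ioo hcont hx hy ⟨hfy.le, hfx.le⟩

section Summand

variable {a x r : ℝ}

lemma sq_sub_sq_pos_of_abs_lt (hr : |r| < a) (hx : a ≤ x) : 0 < x ^ 2 - r ^ 2 :=
  sub_pos.2 (sq_lt_sq' (by linarith [neg_abs_le r]) (by linarith [le_abs_self r]))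

lemma two_sq_div_sq_sub_sq_nonneg (hr : |r| < a) (hx : a ≤ x) :
    0 ≤ 2 * r ^ 2 / (x ^ 2 - r ^ 2) :=
  div_nonneg (by positivity) (sq_sub_sq_pos_of_abs_lt hr hx).le

lemma two_sq_div_sq_sub_sq_le {m : ℝ} (hr : |r| ≤ m) (hm : m < a) (hx : a ≤ x) :
    2 * r ^ 2 / (x ^ 2 - r ^ 2) ≤ 2 * m ^ 2 * a ^ 2 / (a ^ 2 - m ^ 2) * (1 / x ^ 2) := by
  have hrm : r ^ 2 ≤ m ^ 2 := sq_le_sq' (by linarith [neg_abs_le r]) (by linarith [le_abs_self r])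
  have hm0 : 0 ≤ m := (abs_nonneg r).trans hr
  have hma : m ^ 2 < a ^ 2 := pow_lt_pow_left₀ hm hm0 two_ne_zero
  have hax : a ^ 2 ≤ x ^ 2 := pow_le_pow_left₀ (hm0.trans hm.le) hx 2
  rw [div_mul_div_comm, mul_one, div_le_div_iff₀ (by nlinarith) (by nlinarith)]
  nlinarith [mul_nonneg (mul_nonneg (sq_nonneg a) (sq_nonneg x)) (sub_nonneg.2 hrm),
    mul_nonneg (mul_nonneg (sq_nonneg r) (sq_nonneg m)) (sub_nonneg.2 hax)]

lemma two_sq_div_sq_sub_sq_lt {s t : ℝ} (hs : 0 ≤ s) (hst : s < t) (ht : t < x) :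
    2 * s ^ 2 / (x ^ 2 - s ^ 2) < 2 * t ^ 2 / (x ^ 2 - t ^ 2) := by
  have hts : s ^ 2 < t ^ 2 := by nlinarith
  rw [div_lt_div_iff₀ (by nlinarith) (by nlinarith)]
  nlinarith [mul_lt_mul_of_pos_right hts (by nlinarith : (0 : ℝ) < x ^ 2)]

end Summand

/-- `-mittagLefflerSeries ξ r = r g'(r) / g(r)` for the canonical product `g(z) = ∏ₙ (1 - z²/ξₙ²)`. -/
noncomputable def mittagLefflerSeries (ξ : ℕ → ℝ) (r : ℝ) : ℝ :=
  ∑' n, 2 * r ^ 2 / (ξ n ^ 2 - r ^ 2)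

namespace mittagLefflerSeries

variable {ξ : ℕ → ℝ} {a r : ℝ}

@[simp]
lemma apply_zero : mittagLefflerSeries ξ 0 = 0 := by
  simp [mittagLefflerSeries]

lemma nonneg (hξ : ∀ n, a ≤ ξ n) (hr : |r| < a) : 0 ≤ mittagLefflerSeries ξ r :=
  tsum_nonneg fun n => two_sq_div_sq_sub_sq_nonneg hr (hξ n)

lemma summable (hξ : ∀ n, a ≤ ξ n) (hsum : Summable fun n => 1 / ξ n ^ 2) (hr : |r| < a) :
    Summable fun n => 2 * r ^ 2 / (ξ n ^ 2 - r ^ 2) :=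
  .of_nonneg_of_le (fun n => two_sq_div_sq_sub_sq_nonneg hr (hξ n))
    (fun n => two_sq_div_sq_sub_sq_le le_rfl hr (hξ n)) (hsum.mul_left _)

lemma strictMonoOn (hξ : ∀ n, a ≤ ξ n) (hsum : Summable fun n => 1 / ξ n ^ 2) :
    StrictMonoOn (mittagLefflerSeries ξ) (Ico 0 a) := by
  intro s hs t ht hst
  have hsa : |s| < a := by rw [abs_of_nonneg hs.1]; exact hs.2
  have hta : |t| < a := by rw [abs_of_nonneg ht.1]; exact ht.2
  have hlt : ∀ n, 2 * s ^ 2 / (ξ n ^ 2 - s ^ 2) < 2 * t ^ 2 / (ξ n ^ 2 - t ^ 2) :=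
    fun n => two_sq_div_sq_sub_sq_lt hs.1 hst (ht.2.trans_le (hξ n))
  exact Summable.tsum_lt_tsum_of_nonneg (i := 0)
    (fun n => two_sq_div_sq_sub_sq_nonneg hsa (hξ n)) (fun n => (hlt n).le) (hlt 0)
    (summable hξ hsum hta)

lemma continuousOn (hξ : ∀ n, a ≤ ξ n) (hsum : Summable fun n => 1 / ξ n ^ 2) :
    ContinuousOn (mittagLefflerSeries ξ) (Ioo (-a) a) := by
  intro r hr
  obtain ⟨m, hrm, hma⟩ := exists_between (abs_lt.2 hr)
  have hbounded : ContinuousOn (mittagLefflerSeries ξ) (Ioo (-m) m) := by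
    refine continuousOn_tsum (fun n => ?_) (hsum.mul_left (2 * m ^ 2 * a ^ 2 / (a ^ 2 - m ^ 2)))
      fun n s hs => ?_
    · exact ContinuousOn.div (by fun_prop) (by fun_prop) fun s hs =>
        (sq_sub_sq_pos_of_abs_lt ((abs_lt.2 hs).trans hma) (hξ n)).ne'
    · rw [Real.norm_of_nonneg (two_sq_div_sq_sub_sq_nonneg ((abs_lt.2 hs).trans hma) (hξ n))]
      exact two_sq_div_sq_sub_sq_le (abs_le.2 ⟨hs.1.le, hs.2.le⟩) hma (hξ n)
  exact (hbounded.continuousAt (Ioo_mem_nhds (abs_lt.1 hrm).1 (abs_lt.1 hrm).2)).continuousWithinAt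

lemma tendsto_atTop (hξ0 : 0 < ξ 0) (hξ : ∀ n, ξ 0 ≤ ξ n) (hsum : Summable fun n => 1 / ξ n ^ 2) :
    Tendsto (mittagLefflerSeries ξ) (𝓝[<] ξ 0) atTop := by
  have hden : Tendsto (fun r => ξ 0 ^ 2 - r ^ 2) (𝓝[<] ξ 0) (𝓝[>] 0) := by
    refine tendsto_nhdsWithin_iff.2 ⟨?_, ?_⟩
    · exact ((by fun_prop : Continuous fun r : ℝ => ξ 0 ^ 2 - r ^ 2).tendsto' _ _
        (sub_self _)).mono_left nhdsWithin_le_nhds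
    · filter_upwards [Ioo_mem_nhdsLT hξ0] with r hr
      exact sq_sub_sq_pos_of_abs_lt (by rw [abs_of_pos hr.1]; exact hr.2) le_rfl
  have hnum : Tendsto (fun r : ℝ => 2 * r ^ 2) (𝓝[<] ξ 0) (𝓝 (2 * ξ 0 ^ 2)) :=
    ((continuous_const.mul (continuous_pow 2)).tendsto _).mono_left nhdsWithin_le_nhds
  have hfirst := hnum.pos_mul_atTop (by positivity) (tendsto_inv_nhdsGT_zero.comp hden)
  refine tendsto_atTop_mono' _ ?_ hfirst
  filter_upwards [Ioo_mem_nhdsLT hξ0] with r hr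
  have hr' : |r| < ξ 0 := by rw [abs_of_pos hr.1]; exact hr.2
  exact (summable hξ hsum hr').le_tsum 0 fun n _ => two_sq_div_sq_sub_sq_nonneg hr' (hξ n)

variable {ξ' : ℕ → ℝ} {lam : ℝ}

lemma strictMonoOn_add_mul (hξ' : ∀ n, a ≤ ξ' n) (hsum' : Summable fun n => 1 / ξ' n ^ 2)
    (hξ : ∀ n, a ≤ ξ n) (hsum : Summable fun n => 1 / ξ n ^ 2) (hlam : 0 ≤ lam) :
    StrictMonoOn (fun r => mittagLefflerSeries ξ' r + lam * mittagLefflerSeries ξ r) (Ico 0 a) :=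
  (strictMonoOn hξ' hsum').add_monotone fun _ hs _ ht hst =>
    mul_le_mul_of_nonneg_left ((strictMonoOn hξ hsum).monotoneOn hs ht hst) hlam

lemma tendsto_add_mul_atTop (hξ0 : 0 < ξ' 0) (hξ' : ∀ n, ξ' 0 ≤ ξ' n)
    (hsum' : Summable fun n => 1 / ξ' n ^ 2) (hξ : ∀ n, ξ' 0 ≤ ξ n) (hlam : 0 ≤ lam) :
    Tendsto (fun r => mittagLefflerSeries ξ' r + lam * mittagLefflerSeries ξ r)
      (𝓝[<] ξ' 0) atTop :=
  tendsto_atTop_add_right_of_le' _ 0 (tendsto_atTop hξ0 hξ' hsum')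
    (eventually_of_mem (Ioo_mem_nhdsLT hξ0) fun r hr =>
      mul_nonneg hlam (nonneg hξ (by rw [abs_of_pos hr.1]; exact hr.2)))

end mittagLefflerSeries

theorem stmt_17 (ξ' ξ : ℕ → ℝ) (hpos' : ∀ n, 0 < ξ' n)
    (hinter : ∀ n, ξ' n < ξ n) (hinter2 : ∀ n, ξ n < ξ' (n + 1))
    (hsum : Summable fun n => 1 / (ξ n) ^ 2)
    (hsum' : Summable fun n => 1 / (ξ' n) ^ 2)
    (lam : ℝ) (hlam : 0 ≤ lam) (c : ℝ) (hc : 0 < c)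
    (v : ℝ → ℝ)
    (hv : ∀ r ∈ Ioo 0 (ξ' 0),
      v r = -((∑' n, 2 * r ^ 2 / ((ξ' n) ^ 2 - r ^ 2)) +
              lam * ∑' n, 2 * r ^ 2 / ((ξ n) ^ 2 - r ^ 2)) + c) :
    StrictAntiOn v (Ioo 0 (ξ' 0)) ∧ Tendsto v (𝓝[>] 0) (𝓝 c) ∧
      Tendsto v (𝓝[<] (ξ' 0)) atBot ∧
      ∃! r, r ∈ Ioo 0 (ξ' 0) ∧ v r = 0 := by
  set a := ξ' 0
  have ha : 0 < a := hpos' 0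
  have hξ' : ∀ n, a ≤ ξ' n := fun n =>
    monotone_nat_of_le_succ (fun k => ((hinter k).trans (hinter2 k)).le) n.zero_le
  have hξ : ∀ n, a ≤ ξ n := fun n => (hξ' n).trans (hinter n).le
  set F := fun r => mittagLefflerSeries ξ' r + lam * mittagLefflerSeries ξ r
  have hvF : EqOn v (fun r => -F r + c) (Ioo 0 a) := hv
  have hFcont : ContinuousOn F (Ioo (-a) a) :=
    (mittagLefflerSeries.continuousOn hξ' hsum').add
      (continuousOn_const.mul (mittagLefflerSeries.continuousOn hξ hsum))
  have hanti : StrictAntiOn v (Ioo 0 a) :=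
    (((mittagLefflerSeries.strictMonoOn_add_mul hξ' hsum' hξ hsum hlam).mono
      Ioo_subset_Ico_self).neg.add_const c).congr hvF.symm
  have hlim0 : Tendsto v (𝓝[>] 0) (𝓝 c) := by
    have hF0 : ContinuousAt (fun r => -F r + c) 0 :=
      (hFcont.continuousAt (Ioo_mem_nhds (neg_lt_zero.2 ha) ha)).neg.add continuousAt_const
    simpa [F] using (hF0.tendsto.mono_left nhdsWithin_le_nhds).congr'
      (eventuallyEq_of_mem (Ioo_mem_nhdsGT ha) hvF.symm)
  have hlima : Tendsto v (𝓝[<] a) atBot :=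
    (tendsto_atBot_add_const_right _ c (tendsto_neg_atTop_atBot.comp
      (mittagLefflerSeries.tendsto_add_mul_atTop ha hξ' hsum' hξ hlam))).congr'
      (eventuallyEq_of_mem (Ioo_mem_nhdsLT ha) hvF.symm)
  have hvcont : ContinuousOn v (Ioo 0 a) :=
    ((hFcont.mono (Ioo_subset_Ioo_left (neg_lt_zero.2 ha).le)).neg.add continuousOn_const).congr hvF
  exact ⟨hanti, hlim0, hlima, hanti.existsUnique_eq_zero_of_tendsto ha hvcont hlim0 hc hlima⟩
end
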